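/- Let k be a commutative domain, and suppose s: k[t]/⟨t²⟩ ⊗ k[Y] → k[Y] ⊗ k[t]/⟨t²⟩ is a twisting map with ι_0(Y) = Q ≠ 0 and ι_1(Y) = P (where s(t ⊗ a) = ι_0(a) ⊗ 1 + ι_1(a) ⊗ t). Then P = −Y + p_0 for some p_0 ∈ k (i.e., P has degree 1 with leading coefficient −1). -/

import Mathlib

/-!
Writing `σ = ι₁` and `D = ι₀`, the twisted Leibniz rule applied to `F * X = X * F` gives
`D X * (σ F - F) = D F * (σ X - X)` for every `F`. With `Q = D X ≠ 0` and `P = σ X`, taking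
`F = Q` (where `D Q = 0`) shows `σ Q = Q`, hence `D P = -σ Q = -Q`, and then `F = P` gives
`P ∘ P = σ P = X`. An involutive polynomial over a domain is `X` or `-X + c`, and `P = X` would
force `Q = D P = -Q`, i.e. characteristic `2`, where `X = -X` anyway.
-/

open TensorProduct

/-- A twisting map `s : B ⊗ A → A ⊗ B`: it is compatible with the units and
with the multiplications of `A` and `B` (stated on pure tensors, which
suffices by linearity). -/
structure IsTwistingMap (k A B : Type*) [CommRing k] [Ring A] [Ring B]
    [Algebra k A] [Algebra k B] (s : B ⊗[k] A →ₗ[k] A ⊗[k] B) : Prop where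
  unit_left : ∀ a : A, s (1 ⊗ₜ a) = a ⊗ₜ 1
  unit_right : ∀ b : B, s (b ⊗ₜ 1) = 1 ⊗ₜ b
  mul_compat_B : ∀ (b b' : B) (a : A),
    s ((b * b') ⊗ₜ a) =
      (LinearMap.lTensor A (LinearMap.mul' k B))
        ((TensorProduct.assoc k A B B)
          ((LinearMap.rTensor B s)
            ((TensorProduct.assoc k B A B).symm
              ((LinearMap.lTensor B s)
                ((TensorProduct.assoc k B B A) ((b ⊗ₜ b') ⊗ₜ a))))))
  mul_compat_A : ∀ (b : B) (a a' : A),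
    s (b ⊗ₜ (a * a')) =
      (LinearMap.rTensor B (LinearMap.mul' k A))
        ((TensorProduct.assoc k A A B).symm
          ((LinearMap.lTensor A s)
            ((TensorProduct.assoc k A B A)
              ((LinearMap.rTensor A s)
                ((TensorProduct.assoc k B A A).symm (b ⊗ₜ (a ⊗ₜ a')))))))

open DualNumber Polynomial

section TmulDualNumber

variable {k M : Type*} [CommRing k] [AddCommGroup M] [Module k M]

theorem tmul_one_add_tmul_eps_inj {x y x' y' : M} :
    x ⊗ₜ[k] (1 : DualNumber k) + y ⊗ₜ[k] (ε : DualNumber k) =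
        x' ⊗ₜ[k] (1 : DualNumber k) + y' ⊗ₜ[k] (ε : DualNumber k) ↔ x = x' ∧ y = y' := by
  refine ⟨fun h => ⟨?_, ?_⟩, by rintro ⟨rfl, rfl⟩; rfl⟩
  · simpa using congrArg ((TensorProduct.rid k M).toLinearMap ∘ₗ
      LinearMap.lTensor M (TrivSqZeroExt.fstHom k k k).toLinearMap) h
  · simpa using congrArg ((TensorProduct.rid k M).toLinearMap ∘ₗ
      LinearMap.lTensor M (TrivSqZeroExt.sndHom k k)) h

end TmulDualNumber

namespace IsTwistingMap

variable {k A : Type*} [CommRing k] [Ring A] [Algebra k A]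
  {s : DualNumber k ⊗[k] A →ₗ[k] A ⊗[k] DualNumber k}
  {ι₀ ι₁ : A →ₗ[k] A}

theorem ι_mul (hs : IsTwistingMap k A (DualNumber k) s)
    (hι : ∀ a : A, s ((ε : DualNumber k) ⊗ₜ a) = ι₀ a ⊗ₜ 1 + ι₁ a ⊗ₜ (ε : DualNumber k))
    (a b : A) : ι₀ (a * b) = ι₀ a * b + ι₁ a * ι₀ b ∧ ι₁ (a * b) = ι₁ a * ι₁ b := by
  refine (tmul_one_add_tmul_eps_inj (k := k)).mp ?_
  have key := hs.mul_compat_A (ε : DualNumber k) a b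
  simp only [hι, TensorProduct.assoc_tmul, TensorProduct.assoc_symm_tmul, LinearMap.lTensor_tmul,
    LinearMap.rTensor_tmul, map_add, hs.unit_left, tmul_add, add_tmul, LinearMap.mul'_apply] at key
  rw [key, add_tmul]
  abel

theorem ι_ι (hs : IsTwistingMap k A (DualNumber k) s)
    (hι : ∀ a : A, s ((ε : DualNumber k) ⊗ₜ a) = ι₀ a ⊗ₜ 1 + ι₁ a ⊗ₜ (ε : DualNumber k))
    (a : A) : ι₀ (ι₀ a) = 0 ∧ ι₁ (ι₀ a) + ι₀ (ι₁ a) = 0 := by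
  refine (tmul_one_add_tmul_eps_inj (k := k)).mp ?_
  have key := hs.mul_compat_B (ε : DualNumber k) ε a
  simp only [DualNumber.eps_mul_eps, zero_tmul, map_zero, TensorProduct.assoc_tmul,
    TensorProduct.assoc_symm_tmul, LinearMap.lTensor_tmul, LinearMap.rTensor_tmul, map_add, hι,
    tmul_add, add_tmul, LinearMap.mul'_apply, mul_one, one_mul, tmul_zero] at key
  rw [zero_tmul, zero_tmul, add_zero, add_tmul, key]
  abel

theorem ι_one (hs : IsTwistingMap k A (DualNumber k) s)
    (hι : ∀ a : A, s ((ε : DualNumber k) ⊗ₜ a) = ι₀ a ⊗ₜ 1 + ι₁ a ⊗ₜ (ε : DualNumber k)) :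
    ι₁ 1 = 1 := by
  have h : ι₀ 1 ⊗ₜ 1 + ι₁ 1 ⊗ₜ ε = (0 : A) ⊗ₜ[k] (1 : DualNumber k) + (1 : A) ⊗ₜ ε := by
    rw [← hι, hs.unit_right, zero_tmul, zero_add]
  exact (tmul_one_add_tmul_eps_inj.mp h).2

end IsTwistingMap

theorem mul_sub_comm_of_twisted_leibniz {R : Type*} [CommRing R] {σ D : R → R}
    (hD : ∀ a b, D (a * b) = D a * b + σ a * D b) (a b : R) :
    D a * (σ b - b) = D b * (σ a - a) := by
  have h := hD a b
  rw [mul_comm a b, hD b a] at h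
  linear_combination h

theorem Polynomial.linearMap_eq_comp_of_map_mul {R : Type*} [CommSemiring R] (f : R[X] →ₗ[R] R[X])
    (h_one : f 1 = 1) (h_mul : ∀ p q, f (p * q) = f p * f q) (p : R[X]) :
    f p = p.comp (f X) := by
  have h := aeval_algHom_apply (AlgHom.ofLinearMap f h_one h_mul) X p
  rw [aeval_X_left_apply] at h
  rw [comp_eq_aeval]
  exact h.symm

theorem Polynomial.eq_X_or_eq_neg_X_add_C_of_comp_self {R : Type*} [CommRing R] [IsDomain R]
    {p : R[X]} (hp : p.comp p = X) : p = X ∨ ∃ b : R, p = -X + C b := by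
  have hdeg : p.natDegree = 1 := by
    have h := congrArg natDegree hp
    rw [natDegree_comp, natDegree_X] at h
    exact Nat.eq_one_of_mul_eq_one_right h
  obtain ⟨a, -, b, rfl⟩ := natDegree_eq_one.mp hdeg
  have hcomp : C (a * a) * X + C (a * b + b) = X := by
    refine Eq.trans ?_ hp
    simp only [add_comp, mul_comp, C_comp, X_comp, map_mul, map_add]
    ring
  have ha : a * a = 1 := by simpa using congrArg (coeff · 1) hcomp
  have hb : (a + 1) * b = 0 := by simpa [add_mul] using congrArg (coeff · 0) hcomp
  rcases mul_self_eq_one_iff.mp ha with rfl | rfl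
  · rcases mul_eq_zero.mp hb with h2 | rfl
    · have h : (1 : R) = -1 := eq_neg_of_add_eq_zero_left h2
      exact Or.inr ⟨b, by rw [h, map_neg, map_one]; ring⟩
    · exact Or.inl (by simp)
  · exact Or.inr ⟨b, by simp⟩

open DualNumber Polynomial in
theorem stmt18 (k : Type*) [CommRing k] [IsDomain k]
    (s : DualNumber k ⊗[k] Polynomial k →ₗ[k] Polynomial k ⊗[k] DualNumber k)
    (hs : IsTwistingMap k (Polynomial k) (DualNumber k) s)
    (ι₀ ι₁ : Polynomial k →ₗ[k] Polynomial k)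
    (hι : ∀ F : Polynomial k, s ((ε : DualNumber k) ⊗ₜ F) =
      ι₀ F ⊗ₜ (1 : DualNumber k) + ι₁ F ⊗ₜ (ε : DualNumber k))
    (hQ : ι₀ (X : Polynomial k) ≠ 0) :
    ∃ p₀ : k, ι₁ (X : Polynomial k) = -X + C p₀ := by
  set P := ι₁ X
  set Q := ι₀ X
  have swap (F : k[X]) : Q * (ι₁ F - F) = ι₀ F * (P - X) :=
    mul_sub_comm_of_twisted_leibniz (fun a b => (hs.ι_mul hι a b).1) X F
  have hQ_fixed : ι₁ Q = Q := by
    have h := swap Q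
    rw [(hs.ι_ι hι X).1, zero_mul, mul_eq_zero, sub_eq_zero] at h
    exact h.resolve_left hQ
  have hP : ι₀ P = -Q := by linear_combination (hs.ι_ι hι X).2 - hQ_fixed
  have hPP : P.comp P = X := by
    have h : Q * (ι₁ P - X) = 0 := by linear_combination swap P + (P - X) * hP
    rw [mul_eq_zero, sub_eq_zero] at h
    rw [← h.resolve_left hQ]
    exact (linearMap_eq_comp_of_map_mul ι₁ (hs.ι_one hι) (fun a b => (hs.ι_mul hι a b).2) P).symm
  rcases eq_X_or_eq_neg_X_add_C_of_comp_self hPP with hX | hneg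
  · have h2 : (2 : k[X]) = 0 := by
      have h : 2 * Q = 0 := by rw [hX] at hP; linear_combination hP
      exact (mul_eq_zero.mp h).resolve_right hQ
    exact ⟨0, by rw [map_zero, add_zero, hX]; linear_combination X * h2⟩
  · exact hneg
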